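/- Let G be a finite directed acyclic multigraph with a distinguished source vertex s, and suppose every vertex v ≠ s satisfies d(v) ≥ d, where d(v) = |Γ⁻(v) \ {s}| + |[s,v]| (the number of non-source parents of v plus the number of parallel edges from s to v). Then for every vertex t ≠ s that is not adjacent to s, the maximum number of pairwise internally-disjoint directed paths from s to t is at least d. -/

import Mathlib

/-- A directed multigraph on vertex type `V` with edge type `E`. -/
structure Multigraph (V E : Type) where
  tail : E → V
  head : E → V

namespace Multigraph

variable {V E : Type}

/-- A (directed) walk from `s` to `t`: a nonempty list of edges, consecutive
edges compatible, starting at `s` and ending at `t`. -/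
structure Walk (G : Multigraph V E) (s t : V) where
  edges : List E
  ne : edges ≠ []
  first : G.tail (edges.head ne) = s
  last : G.head (edges.getLast ne) = t
  chain : edges.Chain' fun e f => G.head e = G.tail f

namespace Walk

variable {G : Multigraph V E} {s t : V}

/-- The internal vertices of a walk: heads of all edges except the last. -/
def internals (w : G.Walk s t) : Set V :=
  {v | ∃ e ∈ w.edges.dropLast, G.head e = v}

/-- All vertices visited by a walk. -/
def vertexSet (w : G.Walk s t) : Set V :=
  {v | v = s ∨ ∃ e ∈ w.edges, G.head e = v}

/-- The set of edges used by a walk. -/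
def edgeSet (w : G.Walk s t) : Set E := {e | e ∈ w.edges}

/-- A walk is simple (a path) if it visits no vertex twice. -/
def IsSimple (w : G.Walk s t) : Prop := (s :: w.edges.map G.head).Nodup

end Walk

/-- There exist `n` pairwise internally-disjoint paths from `s` to `t`
(in a multigraph, parallel direct edges count as distinct internally-disjoint
paths, so pairwise edge-disjointness is also required). -/
def HasIntDisjoint (G : Multigraph V E) (s t : V) (n : ℕ) : Prop :=
  ∃ P : Fin n → G.Walk s t, ∀ i j, i ≠ j →
    (P i).internals ∩ (P j).internals = ∅ ∧ (P i).edgeSet ∩ (P j).edgeSet = ∅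

/-- There exist `n` pairwise edge-disjoint walks from `s` to `t`. -/
def HasEdgeDisjoint (G : Multigraph V E) (s t : V) (n : ℕ) : Prop :=
  ∃ P : Fin n → G.Walk s t, ∀ i j, i ≠ j →
    (P i).edgeSet ∩ (P j).edgeSet = ∅

/-- `A ⊆ V \ {s,t}` is an `s,t`-vertex cut: removing `A` destroys all
walks from `s` to `t`, i.e. every walk from `s` to `t` meets `A`. -/
def IsVertexCut (G : Multigraph V E) (s t : V) (A : Set V) : Prop :=
  s ∉ A ∧ t ∉ A ∧ ∀ w : G.Walk s t, ∃ v ∈ w.vertexSet, v ∈ A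

/-- There is no edge from `s` to `t`. -/
def Nonadjacent (G : Multigraph V E) (s t : V) : Prop :=
  ∀ e : E, ¬(G.tail e = s ∧ G.head e = t)

/-- The edge cut `[S, S̄]`: all edges with tail in `S` and head outside `S`. -/
def cutE (G : Multigraph V E) [Fintype E] [DecidableEq V] (S : Finset V) : Finset E :=
  Finset.univ.filter fun e => G.tail e ∈ S ∧ G.head e ∉ S

/-- `tail([S, S̄])`: the set of tails of the edges in the cut `[S, S̄]`. -/
def tailSet (G : Multigraph V E) [Fintype E] [DecidableEq V] (S : Finset V) : Finset V :=
  (G.cutE S).image G.tail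

/-- The parents of a vertex `v`. -/
def parents (G : Multigraph V E) (v : V) : Set V :=
  {u | ∃ e : E, G.tail e = u ∧ G.head e = v}

/-- The in-degree of a vertex: number of edges entering it. -/
def indeg (G : Multigraph V E) [Fintype E] [DecidableEq V] (t : V) : ℕ :=
  (Finset.univ.filter fun e => G.head e = t).card

/-- The diversity `d(v) = |Γ⁻(v) \ {s}| + |[s,v]|` of a vertex `v`
with respect to the source `s`. -/
def diversity (G : Multigraph V E) [Fintype V] [Fintype E] [DecidableEq V]
    (s v : V) : ℕ :=
  (Finset.univ.filter fun u => u ≠ s ∧ ∃ e : E, G.tail e = u ∧ G.head e = v).card +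
  (Finset.univ.filter fun e : E => G.tail e = s ∧ G.head e = v).card

/-- A multigraph is acyclic if it has no closed walk. -/
def Acyclic (G : Multigraph V E) : Prop := ∀ v : V, IsEmpty (G.Walk v v)

/-- The broadcast transformation with source `s`: every vertex `u ≠ s` is
split into `u → u⁺`, all edges into `u` are kept, and every edge out of
`u` is redirected to originate from `u⁺` (edges out of `s` are unchanged). -/
def broadcast (G : Multigraph V E) (s : V) [DecidableEq V] :
    Multigraph (V ⊕ {u : V // u ≠ s}) (E ⊕ {u : V // u ≠ s}) where
  tail := fun x => match x with
    | Sum.inl e => if h : G.tail e = s then Sum.inl s else Sum.inr ⟨G.tail e, h⟩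
    | Sum.inr u => Sum.inl u.1
  head := fun x => match x with
    | Sum.inl e => Sum.inl (G.head e)
    | Sum.inr u => Sum.inr u

/-- `hw` is the walk in the broadcast transformation corresponding to `w`:
the original edges appearing along `hw`, in order, are exactly those of `w`. -/
def Corresponds [DecidableEq V] {G : Multigraph V E} {s t : V} (w : G.Walk s t)
    (hw : (G.broadcast s).Walk (Sum.inl s) (Sum.inl t)) : Prop :=
  hw.edges.filterMap (Sum.elim some (fun _ => none)) = w.edges

/-- `v` is reachable from `s` by a walk avoiding the vertex set `A`
(in the graph `G − A`). -/
def ReachAvoid (G : Multigraph V E) (A : Set V) (s v : V) : Prop :=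
  v = s ∨ ∃ w : G.Walk s v, ∀ x ∈ w.vertexSet, x ∉ A

end Multigraph

/-!
Split every vertex `u ≠ s` into an edge `u → u⁺` (the broadcast transformation). In the split
graph every `s,t`-edge cut has at least `d` edges: by acyclicity some vertex `v` outside the cut
has all its parents inside, and each of the `d(v) ≥ d` parents `u ≠ s` and edges `s → v` puts
its own edge into the cut (the split edge `u → u⁺` or an edge `u⁺ → v`). Max-flow min-cut
for unit capacities (via augmenting trails) and flow decomposition then give `d` edge-disjoint
walks in the split graph. Contracting the split edges turns them into walks of `G`, and since
such a walk passes an internal vertex `v` only through `v → v⁺`, edge-disjointness upstairs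
becomes internal disjointness in `G`.
-/

open scoped symmDiff

theorem List.dropLast_cons_subset {α : Type*} {a : α} {l : List α} :
    (a :: l).dropLast ⊆ a :: l.dropLast := by
  cases l with
  | nil => simp
  | cons b l => simp [List.dropLast_cons_cons]

namespace Multigraph

variable {V E : Type}

namespace Walk

variable {G : Multigraph V E}

def single (e : E) : G.Walk (G.tail e) (G.head e) :=
  ⟨[e], List.cons_ne_nil e [], rfl, rfl, List.isChain_singleton e⟩

def snoc {a b : V} (w : G.Walk a b) (e : E) (h : G.tail e = b) : G.Walk a (G.head e) where
  edges := w.edges ++ [e]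
  ne := by simp
  first := by rw [List.head_append_of_ne_nil w.ne]; exact w.first
  last := by simp
  chain := w.chain.append (List.isChain_singleton e) (by
    simp [List.getLast?_eq_some_getLast w.ne, w.last, h])

theorem nonempty_of_transGen {u v : V}
    (h : Relation.TransGen (fun a b => a ∈ G.parents b) u v) : Nonempty (G.Walk u v) := by
  induction h with
  | single h => obtain ⟨e, rfl, rfl⟩ := h; exact ⟨single e⟩
  | tail _ h ih => obtain ⟨e, he, rfl⟩ := h; exact ⟨ih.some.snoc e he⟩

theorem nonempty_walk_head_of_mem {a b : V} (w : G.Walk a b) {e : E} (he : e ∈ w.edges) :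
    Nonempty (G.Walk a (G.head e)) := by
  obtain ⟨A, B, hAB⟩ := List.append_of_mem he
  have hpre : A ++ [e] <+: w.edges := ⟨B, by simp [hAB]⟩
  refine ⟨⟨A ++ [e], by simp, ?_, by simp, w.chain.prefix hpre⟩⟩
  rw [← w.first]
  cases A <;> simp [hAB]

end Walk

variable {G : Multigraph V E}

theorem Acyclic.wellFounded_parents [Finite V] (h : G.Acyclic) :
    WellFounded fun u v => u ∈ G.parents v := by
  have : IsTrans V (Relation.TransGen fun u v => u ∈ G.parents v) :=
    ⟨fun _ _ _ => .trans⟩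
  have : Std.Irrefl (Relation.TransGen fun u v => u ∈ G.parents v) :=
    ⟨fun v hv => (h v).false (Walk.nonempty_of_transGen hv).some⟩
  exact Subrelation.wf (fun h => Relation.TransGen.single h)
    (Finite.wellFounded_of_trans_of_irrefl (Relation.TransGen fun u v => u ∈ G.parents v))

theorem Acyclic.start_notMem_internals (h : G.Acyclic) {s t : V} (w : G.Walk s t) :
    s ∉ w.internals := by
  rintro ⟨e, he, rfl⟩
  exact (h _).false (w.nonempty_walk_head_of_mem (List.dropLast_subset _ he)).some

section AugTrail

variable [DecidableEq E] {s : V} {F : Finset E}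

/-- An augmenting trail from `s` to `v` in the residual graph of `F`, recorded by its set `U` of
(pairwise distinct) edges. -/
inductive AugTrail (G : Multigraph V E) (s : V) (F : Finset E) : V → Finset E → Prop
  | nil : AugTrail G s F s ∅
  | forward {v U e} : AugTrail G s F v U → e ∉ F → e ∉ U → G.tail e = v →
      AugTrail G s F (G.head e) (insert e U)
  | backward {v U e} : AugTrail G s F v U → e ∈ F → e ∉ U → G.head e = v →
      AugTrail G s F (G.tail e) (insert e U)

def AugReachable (G : Multigraph V E) (s : V) (F : Finset E) (v : V) : Prop :=
  ∃ U, AugTrail G s F v U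

theorem AugTrail.augReachable_of_mem {v : V} {U : Finset E} (h : AugTrail G s F v U) :
    ∀ e ∈ U, AugReachable G s F (G.tail e) ∧ AugReachable G s F (G.head e) := by
  induction h with
  | nil => simp
  | @forward v U e h heF heU hev ih =>
    rintro f hf
    rcases Finset.mem_insert.1 hf with rfl | hf
    · exact ⟨⟨U, hev ▸ h⟩, ⟨_, h.forward heF heU hev⟩⟩
    · exact ih f hf
  | @backward v U e h heF heU hev ih =>
    rintro f hf
    rcases Finset.mem_insert.1 hf with rfl | hf
    · exact ⟨⟨_, h.backward heF heU hev⟩, ⟨U, hev ▸ h⟩⟩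
    · exact ih f hf

theorem AugReachable.head {e : E} (h : AugReachable G s F (G.tail e)) (he : e ∉ F) :
    AugReachable G s F (G.head e) := by
  obtain ⟨U, hU⟩ := h
  by_cases heU : e ∈ U
  · exact (hU.augReachable_of_mem e heU).2
  · exact ⟨_, hU.forward he heU rfl⟩

theorem AugReachable.tail {e : E} (h : AugReachable G s F (G.head e)) (he : e ∈ F) :
    AugReachable G s F (G.tail e) := by
  obtain ⟨U, hU⟩ := h
  by_cases heU : e ∈ U
  · exact (hU.augReachable_of_mem e heU).1
  · exact ⟨_, hU.backward he heU rfl⟩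

end AugTrail

section Flow

variable [DecidableEq V] {s t : V} {F : Finset E}

def incidence (G : Multigraph V E) (e : E) (x : V) : ℤ :=
  (if G.tail e = x then 1 else 0) - (if G.head e = x then 1 else 0)

def netOutflow (G : Multigraph V E) (F : Finset E) (x : V) : ℤ :=
  ∑ e ∈ F, G.incidence e x

/-- A unit-capacity `s,t`-flow, given by the set of edges carrying flow. -/
def IsFlow (G : Multigraph V E) (s t : V) (F : Finset E) : Prop :=
  ∀ x, x ≠ s → x ≠ t → G.netOutflow F x = 0

theorem sum_map_incidence_of_isChain (x : V) : ∀ (L : List E) (hne : L ≠ []),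
    L.IsChain (fun e f => G.head e = G.tail f) →
    (L.map (G.incidence · x)).sum =
      (if G.tail (L.head hne) = x then (1 : ℤ) else 0) -
        if G.head (L.getLast hne) = x then 1 else 0
  | [e], _, _ => by
    rw [List.head_cons, List.getLast_singleton]
    simp [incidence]
  | e :: f :: L, _, h => by
    rw [List.isChain_cons_cons] at h
    rw [List.map_cons, List.sum_cons, sum_map_incidence_of_isChain x (f :: L) (by simp) h.2,
      List.head_cons, List.head_cons, List.getLast_cons_cons, incidence, h.1]
    ring

theorem exists_tail_eq_of_netOutflow_pos (hpos : 0 < G.netOutflow F s) :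
    ∃ e ∈ F, G.tail e = s := by
  by_contra! h
  have : G.netOutflow F s ≤ 0 := Finset.sum_nonpos fun e he => by
    simp only [incidence, if_neg (h e he)]
    split_ifs <;> norm_num
  omega

theorem IsFlow.netOutflow_eq_sum_crossing (hF : G.IsFlow s t F) {S : Finset V} (hs : s ∈ S)
    (ht : t ∉ S) : G.netOutflow F s =
      ∑ e ∈ F, ((if G.tail e ∈ S then 1 else 0) - if G.head e ∈ S then 1 else 0) := by
  calc G.netOutflow F s = ∑ x ∈ S, G.netOutflow F x := by
        refine (Finset.sum_eq_single_of_mem s hs fun x hx hxs => hF x hxs ?_).symm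
        rintro rfl
        exact ht hx
    _ = _ := by
        simp only [netOutflow]
        rw [Finset.sum_comm]
        refine Finset.sum_congr rfl fun e _ => ?_
        simp only [incidence, Finset.sum_sub_distrib, Finset.sum_ite_eq]

theorem IsFlow.card_cutE_le_netOutflow [Fintype E] (hF : G.IsFlow s t F) {S : Finset V}
    (hs : s ∈ S) (ht : t ∉ S) (hout : G.cutE S ⊆ F)
    (hin : ∀ e ∈ F, G.head e ∈ S → G.tail e ∈ S) :
    ((G.cutE S).card : ℤ) ≤ G.netOutflow F s := by
  rw [hF.netOutflow_eq_sum_crossing hs ht]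
  calc ((G.cutE S).card : ℤ) = ∑ e ∈ G.cutE S,
        ((if G.tail e ∈ S then 1 else 0) - if G.head e ∈ S then 1 else 0) := by
        rw [Finset.card_eq_sum_ones, Nat.cast_sum]
        refine Finset.sum_congr rfl fun e he => ?_
        simp only [cutE, Finset.mem_filter, Finset.mem_univ, true_and] at he
        simp [he.1, he.2]
    _ ≤ _ := Finset.sum_le_sum_of_subset_of_nonneg hout fun e heF _ => by
        by_cases hh : G.head e ∈ S
        · simp [hh, hin e heF hh]
        · by_cases htl : G.tail e ∈ S <;> simp [hh, htl]

variable [DecidableEq E]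

theorem netOutflow_sdiff {U : Finset E} (h : U ⊆ F) (x : V) :
    G.netOutflow (F \ U) x = G.netOutflow F x - G.netOutflow U x :=
  eq_sub_of_add_eq (Finset.sum_sdiff h)

theorem Walk.netOutflow_edges {a b : V} (w : G.Walk a b) (hw : w.edges.Nodup) (x : V) :
    G.netOutflow w.edges.toFinset x = (if a = x then 1 else 0) - (if b = x then 1 else 0) := by
  rw [netOutflow, List.sum_toFinset _ hw, sum_map_incidence_of_isChain x _ w.ne w.chain,
    w.first, w.last]

theorem IsFlow.exists_tail_eq_notMem (hF : G.IsFlow s t F) (hpos : 0 < G.netOutflow F s)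
    {v : V} (hvt : v ≠ t) (w : G.Walk s v) (hw : w.edges.Nodup) (hwF : w.edges.toFinset ⊆ F) :
    ∃ e ∈ F, G.tail e = v ∧ e ∉ w.edges := by
  by_contra! hout
  have hrest : G.netOutflow (F \ w.edges.toFinset) v ≤ 0 := Finset.sum_nonpos fun e he => by
    obtain ⟨heF, hew⟩ := Finset.mem_sdiff.1 he
    have : G.tail e ≠ v := fun h => hew (List.mem_toFinset.2 (hout e heF h))
    simp only [incidence, if_neg this]
    split_ifs <;> norm_num
  rw [netOutflow_sdiff hwF, w.netOutflow_edges hw] at hrest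
  by_cases hvs : v = s
  · subst hvs
    rw [if_pos rfl] at hrest
    omega
  · rw [hF v hvs hvt, if_neg (Ne.symm hvs)] at hrest
    simp at hrest

theorem IsFlow.exists_walk_of_walk (hF : G.IsFlow s t F) (hpos : 0 < G.netOutflow F s)
    {v : V} (w : G.Walk s v) (hw : w.edges.Nodup) (hwF : w.edges.toFinset ⊆ F) :
    ∃ w' : G.Walk s t, w'.edges.Nodup ∧ w'.edges.toFinset ⊆ F := by
  by_cases hvt : v = t
  · subst hvt
    exact ⟨w, hw, hwF⟩
  obtain ⟨e, heF, hev, hew⟩ := hF.exists_tail_eq_notMem hpos hvt w hw hwF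
  have hw' : (w.snoc e hev).edges.Nodup := by
    simpa [Walk.snoc, List.nodup_append] using ⟨hw, fun a ha h => hew (h ▸ ha)⟩
  have hwF' : (w.snoc e hev).edges.toFinset ⊆ F := by
    simpa [Walk.snoc, Finset.insert_subset_iff] using ⟨heF, hwF⟩
  exact hF.exists_walk_of_walk hpos (w.snoc e hev) hw' hwF'
termination_by F.card - w.edges.length
decreasing_by
  have := Finset.card_le_card hwF'
  rw [List.toFinset_card_of_nodup hw'] at this
  simp only [Walk.snoc, List.length_append, List.length_singleton] at this ⊢
  omega

theorem IsFlow.exists_walk (hF : G.IsFlow s t F) (hpos : 0 < G.netOutflow F s) :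
    ∃ w : G.Walk s t, w.edges.Nodup ∧ w.edges.toFinset ⊆ F := by
  obtain ⟨e, heF, rfl⟩ := exists_tail_eq_of_netOutflow_pos hpos
  exact hF.exists_walk_of_walk hpos (.single e) (List.nodup_singleton e)
    (by simpa [Walk.single] using heF)

theorem netOutflow_insert {e : E} (he : e ∉ F) (x : V) :
    G.netOutflow (insert e F) x = G.incidence e x + G.netOutflow F x :=
  Finset.sum_insert he

theorem netOutflow_erase {e : E} (he : e ∈ F) (x : V) :
    G.netOutflow (F.erase e) x = G.netOutflow F x - G.incidence e x :=
  eq_sub_of_add_eq' (Finset.add_sum_erase F (G.incidence · x) he)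

theorem AugTrail.netOutflow_symmDiff {v : V} {U : Finset E} (h : AugTrail G s F v U) (x : V) :
    G.netOutflow (F ∆ U) x =
      G.netOutflow F x + ((if s = x then 1 else 0) - if v = x then 1 else 0) := by
  induction h with
  | nil => simp [symmDiff]
  | @forward v U e _ heF heU hev ih =>
    have hsymm : F ∆ insert e U = insert e (F ∆ U) := by
      ext a; by_cases a = e <;> simp_all [Finset.mem_symmDiff]
    rw [hsymm, netOutflow_insert (by simp [Finset.mem_symmDiff, heF, heU]), ih, incidence, hev]
    ring
  | @backward v U e _ heF heU hev ih =>
    have hsymm : F ∆ insert e U = (F ∆ U).erase e := by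
      ext a; by_cases a = e <;> simp_all [Finset.mem_symmDiff]
    rw [hsymm, netOutflow_erase (by simp [Finset.mem_symmDiff, heF, heU]), ih, incidence, hev]
    ring

/-- A flow of maximal value saturates the cut formed by the vertices it can still augment to. -/
theorem exists_isFlow_le_netOutflow [Fintype V] [Fintype E] {d : ℕ} (hts : t ≠ s)
    (hcut : ∀ S : Finset V, s ∈ S → t ∉ S → d ≤ (G.cutE S).card) :
    ∃ F : Finset E, G.IsFlow s t F ∧ (d : ℤ) ≤ G.netOutflow F s := by
  classical
  obtain ⟨F, hFflow, hFmax⟩ := Finset.exists_max_image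
    (Finset.univ.filter fun F => G.IsFlow s t F) (G.netOutflow · s)
    ⟨∅, Finset.mem_filter.2 ⟨Finset.mem_univ _, fun _ _ _ => Finset.sum_empty⟩⟩
  have hF : G.IsFlow s t F := (Finset.mem_filter.1 hFflow).2
  refine ⟨F, hF, ?_⟩
  set S := Finset.univ.filter (AugReachable G s F)
  have hs : s ∈ S := Finset.mem_filter.2 ⟨Finset.mem_univ _, ∅, .nil⟩
  have ht : t ∉ S := by
    rintro htS
    obtain ⟨U, hU⟩ := (Finset.mem_filter.1 htS).2
    have hflow : G.IsFlow s t (F ∆ U) := fun x hxs hxt => by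
      rw [hU.netOutflow_symmDiff, hF x hxs hxt, if_neg (Ne.symm hxs), if_neg (Ne.symm hxt)]
      simp
    have := hFmax _ (Finset.mem_filter.2 ⟨Finset.mem_univ _, hflow⟩)
    rw [hU.netOutflow_symmDiff, if_pos rfl, if_neg hts] at this
    omega
  have hout : G.cutE S ⊆ F := fun e he => by
    simp only [cutE, S, Finset.mem_filter, Finset.mem_univ, true_and] at he
    by_contra heF
    exact he.2 (he.1.head heF)
  have hin : ∀ e ∈ F, G.head e ∈ S → G.tail e ∈ S := fun e heF he => by
    simp only [S, Finset.mem_filter, Finset.mem_univ, true_and] at he ⊢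
    exact he.tail heF
  exact (Int.ofNat_le.2 (hcut S hs ht)).trans (hF.card_cutE_le_netOutflow hs ht hout hin)

theorem IsFlow.exists_disjoint_walks (hF : G.IsFlow s t F) (hts : t ≠ s) {m : ℕ}
    (hm : (m : ℤ) ≤ G.netOutflow F s) :
    ∃ P : Fin m → G.Walk s t, (∀ i, (P i).edgeSet ⊆ F) ∧
      Pairwise fun i j => Disjoint (P i).edgeSet (P j).edgeSet := by
  induction m generalizing F with
  | zero => exact ⟨Fin.elim0, fun i => i.elim0, fun i => i.elim0⟩
  | succ m ih =>
    obtain ⟨w, hw, hwF⟩ := hF.exists_walk (by omega)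
    have hF' : G.IsFlow s t (F \ w.edges.toFinset) := fun x hxs hxt => by
      rw [netOutflow_sdiff hwF, hF x hxs hxt, w.netOutflow_edges hw, if_neg (Ne.symm hxs),
        if_neg (Ne.symm hxt)]
      simp
    have hm' : (m : ℤ) ≤ G.netOutflow (F \ w.edges.toFinset) s := by
      rw [netOutflow_sdiff hwF, w.netOutflow_edges hw, if_pos rfl, if_neg hts]
      push_cast at hm
      omega
    obtain ⟨P, hPF, hPdisj⟩ := ih hF' hm'
    have hwP : ∀ i, Disjoint w.edgeSet (P i).edgeSet := fun i =>
      Set.disjoint_left.2 fun e hew heP =>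
        (Finset.mem_sdiff.1 (hPF i heP)).2 (List.mem_toFinset.2 hew)
    refine ⟨Fin.cons w P, fun i => ?_, fun i j hij => ?_⟩
    · induction i using Fin.cases with
      | zero => exact fun e he => hwF (List.mem_toFinset.2 he)
      | succ i => exact (hPF i).trans (by simp)
    · induction i using Fin.cases <;> induction j using Fin.cases
      · exact absurd rfl hij
      · simpa using hwP _
      · simpa using (hwP _).symm
      · simpa using hPdisj (fun h => hij (congrArg Fin.succ h))

theorem hasEdgeDisjoint_of_le_card_cutE [Fintype V] [Fintype E] {d : ℕ} (hts : t ≠ s)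
    (hcut : ∀ S : Finset V, s ∈ S → t ∉ S → d ≤ (G.cutE S).card) :
    G.HasEdgeDisjoint s t d := by
  classical
  obtain ⟨F, hF, hd⟩ := exists_isFlow_le_netOutflow hts hcut
  obtain ⟨P, -, hP⟩ := hF.exists_disjoint_walks hts hd
  exact ⟨P, fun i j hij => Set.disjoint_iff_inter_eq_empty.1 (hP hij)⟩

end Flow

section Broadcast

variable [DecidableEq V] {G : Multigraph V E} {s t : V}

theorem broadcast_tail_inl (e : E) : (G.broadcast s).tail (.inl e) =
    if h : G.tail e = s then .inl s else .inr ⟨G.tail e, h⟩ := rfl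

@[simp] theorem inl_eq_broadcast_tail_inl {e : E} {v : V} :
    .inl v = (G.broadcast s).tail (.inl e) ↔ v = s ∧ G.tail e = s := by
  rw [broadcast_tail_inl]
  split_ifs with h <;> simp [h]

@[simp] theorem inr_eq_broadcast_tail_inl {e : E} {u : {u : V // u ≠ s}} :
    .inr u = (G.broadcast s).tail (.inl e) ↔ G.tail e = u.1 := by
  rw [broadcast_tail_inl]
  split_ifs with h
  · simp [h, Ne.symm u.2]
  · simp [Subtype.ext_iff, eq_comm]

@[simp] theorem broadcast_head_inl (e : E) :
    (G.broadcast s).head (.inl e) = .inl (G.head e) := rfl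

@[simp] theorem broadcast_tail_inr (u : {u : V // u ≠ s}) :
    (G.broadcast s).tail (.inr u) = .inl u.1 := rfl

@[simp] theorem broadcast_head_inr (u : {u : V // u ≠ s}) :
    (G.broadcast s).head (.inr u) = .inr u := rfl

theorem isChain_filterMap_getLeft : ∀ {L : List (E ⊕ {u : V // u ≠ s})},
    L.IsChain (fun x y => (G.broadcast s).head x = (G.broadcast s).tail y) →
    (L.filterMap Sum.getLeft?).IsChain fun e f => G.head e = G.tail f
  | [], _ => .nil
  | [x], _ => by cases x <;> simp [List.filterMap_cons]
  | .inr _ :: y :: L, h => by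
    simpa [List.filterMap_cons] using isChain_filterMap_getLeft (L := y :: L) h.tail
  | .inl e :: .inl f :: L, h => by
    rw [List.isChain_cons_cons] at h
    have := isChain_filterMap_getLeft h.2
    simp only [broadcast_head_inl, inl_eq_broadcast_tail_inl] at h
    simpa [List.filterMap_cons, h.1.1, h.1.2] using this
  | .inl e :: .inr u :: [], h => by simp [List.filterMap_cons]
  | .inl e :: .inr u :: .inl f :: L, h => by
    have := isChain_filterMap_getLeft h.tail
    simp only [List.isChain_cons_cons, broadcast_head_inl, broadcast_tail_inr, broadcast_head_inr,
      Sum.inl.injEq, inr_eq_broadcast_tail_inl] at h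
    simp only [List.filterMap_cons, Sum.getLeft?_inl, Sum.getLeft?_inr,
      List.isChain_cons_cons] at this ⊢
    exact ⟨h.1.trans h.2.1.symm, this⟩
  | .inl e :: .inr u :: .inr u' :: L, h => by
    simp [List.isChain_cons_cons] at h

theorem inr_mem_of_mem_dropLast_filterMap_getLeft : ∀ {L : List (E ⊕ {u : V // u ≠ s})},
    L.IsChain (fun x y => (G.broadcast s).head x = (G.broadcast s).tail y) → ∀ {e : E},
    e ∈ (L.filterMap Sum.getLeft?).dropLast → (hes : G.head e ≠ s) →
      .inr ⟨G.head e, hes⟩ ∈ L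
  | [], _, _, he, _ => by simp at he
  | [x], _, _, he, _ => by cases x <;> simp [List.filterMap_cons] at he
  | .inr _ :: y :: L, h, _, he, hes => List.mem_cons_of_mem _
      (inr_mem_of_mem_dropLast_filterMap_getLeft (L := y :: L) h.tail
        (by simpa [List.filterMap_cons] using he) hes)
  | .inl f :: .inl g :: L, h, e, he, hes => by
    rw [List.isChain_cons_cons] at h
    simp only [broadcast_head_inl, inl_eq_broadcast_tail_inl] at h
    simp only [List.filterMap_cons, Sum.getLeft?_inl, List.dropLast_cons_cons,
      List.mem_cons] at he
    rcases he with rfl | he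
    · exact absurd h.1.1 hes
    · exact List.mem_cons_of_mem _ (inr_mem_of_mem_dropLast_filterMap_getLeft h.2
        (by simpa [List.filterMap_cons] using he) hes)
  | .inl f :: .inr u :: L, h, e, he, hes => by
    rw [List.isChain_cons] at h
    simp only [List.filterMap_cons, Sum.getLeft?_inl, Sum.getLeft?_inr] at he
    rcases List.mem_cons.1 (List.dropLast_cons_subset he) with rfl | he
    · have hu : u = ⟨G.head e, hes⟩ := Subtype.ext (Sum.inl.inj (h.1 _ rfl)).symm
      simp [hu]
    · exact List.mem_cons_of_mem _ (inr_mem_of_mem_dropLast_filterMap_getLeft h.2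
        (by simpa [List.filterMap_cons] using he) hes)

theorem Walk.exists_edges_eq_inl_cons {b : V ⊕ {u : V // u ≠ s}}
    (w : (G.broadcast s).Walk (.inl s) b) : ∃ e L, w.edges = .inl e :: L ∧ G.tail e = s := by
  have hfirst := w.first
  cases hx : w.edges.head w.ne with
  | inl e =>
    rw [hx, eq_comm, inl_eq_broadcast_tail_inl] at hfirst
    exact ⟨e, w.edges.tail, hx ▸ (List.cons_head_tail w.ne).symm, hfirst.2⟩
  | inr u =>
    rw [hx, broadcast_tail_inr, Sum.inl.injEq] at hfirst
    exact absurd hfirst u.2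

theorem Walk.exists_edges_eq_append_inl {a : V ⊕ {u : V // u ≠ s}}
    (w : (G.broadcast s).Walk a (.inl t)) : ∃ L g, w.edges = L ++ [.inl g] ∧ G.head g = t := by
  have hlast := w.last
  cases hx : w.edges.getLast w.ne with
  | inl g =>
    rw [hx, broadcast_head_inl, Sum.inl.injEq] at hlast
    exact ⟨w.edges.dropLast, g, hx ▸ (List.dropLast_append_getLast w.ne).symm, hlast⟩
  | inr u =>
    rw [hx, broadcast_head_inr] at hlast
    exact (Sum.inr_ne_inl hlast).elim

def Walk.ofBroadcast (w : (G.broadcast s).Walk (.inl s) (.inl t)) : G.Walk s t where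
  edges := w.edges.filterMap Sum.getLeft?
  ne := by
    obtain ⟨e, L, hw, -⟩ := w.exists_edges_eq_inl_cons
    simp [hw]
  first := by
    obtain ⟨e, L, hw, he⟩ := w.exists_edges_eq_inl_cons
    simpa [hw] using he
  last := by
    obtain ⟨L, g, hw, hg⟩ := w.exists_edges_eq_append_inl
    simpa [hw, List.filterMap_append] using hg
  chain := isChain_filterMap_getLeft w.chain

theorem Walk.inr_mem_edges_of_mem_ofBroadcast_internals
    (w : (G.broadcast s).Walk (.inl s) (.inl t)) {v : V} (hv : v ∈ w.ofBroadcast.internals)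
    (hvs : v ≠ s) : .inr ⟨v, hvs⟩ ∈ w.edges := by
  obtain ⟨e, he, rfl⟩ := hv
  exact inr_mem_of_mem_dropLast_filterMap_getLeft w.chain he hvs

theorem Walk.mem_ofBroadcast_edgeSet (w : (G.broadcast s).Walk (.inl s) (.inl t)) {e : E} :
    e ∈ w.ofBroadcast.edgeSet ↔ .inl e ∈ w.edges := by
  simp [Walk.ofBroadcast, Walk.edgeSet]

theorem HasEdgeDisjoint.hasIntDisjoint_of_broadcast (hacyc : G.Acyclic) {n : ℕ}
    (h : (G.broadcast s).HasEdgeDisjoint (.inl s) (.inl t) n) : G.HasIntDisjoint s t n := by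
  obtain ⟨P, hP⟩ := h
  refine ⟨fun i => (P i).ofBroadcast, fun i j hij => ⟨?_, ?_⟩⟩
  · refine Set.eq_empty_of_forall_notMem fun v ⟨hvi, hvj⟩ => ?_
    have hvs : v ≠ s := by
      rintro rfl
      exact hacyc.start_notMem_internals _ hvi
    exact (Set.eq_empty_iff_forall_notMem.1 (hP i j hij)) (.inr ⟨v, hvs⟩)
      ⟨(P i).inr_mem_edges_of_mem_ofBroadcast_internals hvi hvs,
        (P j).inr_mem_edges_of_mem_ofBroadcast_internals hvj hvs⟩
  · refine Set.eq_empty_of_forall_notMem fun e ⟨hei, hej⟩ => ?_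
    exact (Set.eq_empty_iff_forall_notMem.1 (hP i j hij)) (.inl e)
      ⟨(P i).mem_ofBroadcast_edgeSet.1 hei, (P j).mem_ofBroadcast_edgeSet.1 hej⟩

theorem le_card_cutE_broadcast [Fintype V] [Fintype E] (hacyc : G.Acyclic) {d : ℕ}
    (hdiv : ∀ v : V, v ≠ s → d ≤ G.diversity s v) {S : Finset (V ⊕ {u : V // u ≠ s})}
    (hs : .inl s ∈ S) (ht : .inl t ∉ S) : d ≤ ((G.broadcast s).cutE S).card := by
  obtain ⟨v, hvS : Sum.inl v ∉ S, hmin⟩ :=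
    hacyc.wellFounded_parents.has_min {v : V | Sum.inl v ∉ S} ⟨t, ht⟩
  have hvs : v ≠ s := by
    rintro rfl
    exact hvS hs
  have hpar : ∀ e, G.head e = v → .inl (G.tail e) ∈ S := fun e he =>
    by_contra fun h => hmin _ h ⟨e, rfl, he⟩
  refine (hdiv v hvs).trans ?_
  rw [diversity, ← Finset.card_disjSum]
  refine Finset.card_le_card_of_surjOn
    (Sum.elim (fun e => if G.tail e = s then .inr e else .inl (G.tail e)) fun u => .inl u.1) ?_
  rintro (u | e) hx
  · obtain ⟨hus, e, rfl, hev⟩ : u ≠ s ∧ ∃ e, G.tail e = u ∧ G.head e = v := by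
      simpa using hx
    by_cases hu : .inr ⟨G.tail e, hus⟩ ∈ S
    · refine ⟨.inl e, ?_, by simp [hus]⟩
      simp [cutE, broadcast_tail_inl, hus, hu, hev, hvS]
    · refine ⟨.inr ⟨G.tail e, hus⟩, ?_, rfl⟩
      simp [cutE, hpar e hev, hu]
  · obtain ⟨hes, hev⟩ : G.tail e = s ∧ G.head e = v := by simpa using hx
    refine ⟨.inl e, ?_, by simp [hes]⟩
    simp [cutE, broadcast_tail_inl, hes, hs, hev, hvS]

end Broadcast

end Multigraph

theorem stmt3_general {V E : Type} [Fintype V] [Fintype E] [DecidableEq V]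
    (G : Multigraph V E) (s : V) (hacyc : G.Acyclic) (d : ℕ)
    (hdiv : ∀ v : V, v ≠ s → d ≤ G.diversity s v)
    (t : V) (hts : t ≠ s) :
    G.HasIntDisjoint s t d := by
  classical
  exact Multigraph.HasEdgeDisjoint.hasIntDisjoint_of_broadcast hacyc <|
    Multigraph.hasEdgeDisjoint_of_le_card_cutE (Sum.inl_injective.ne hts) fun _ hs ht =>
      Multigraph.le_card_cutE_broadcast hacyc hdiv hs ht

/-- In an acyclic multigraph in which every non-source vertex has
diversity at least `d`, every vertex `t ≠ s` nonadjacent to `s` admits at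
least `d` pairwise internally-disjoint paths from `s`. -/
theorem stmt3 {V E : Type} [Fintype V] [Fintype E] [DecidableEq V]
    (G : Multigraph V E) (s : V) (hacyc : G.Acyclic) (d : ℕ)
    (hdiv : ∀ v : V, v ≠ s → d ≤ G.diversity s v)
    (t : V) (hts : t ≠ s) (hna : G.Nonadjacent s t) :
    G.HasIntDisjoint s t d :=
  stmt3_general G s hacyc d hdiv t hts
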